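/- Let A* ∈ ℂ^{N×n} be isometric, x0 ∈ ℂ^n, and b := |A*x0| ∈ ℝ^N with all entries positive. Assume the phase retrieval solution is unique up to a global phase: every x ∈ ℂ^n with |A*x| = b componentwise satisfies x = e^{iθ}x0 for some θ ∈ ℝ. If y ∈ ℂ^N has all components nonzero and is a fixed point of the Fourier-domain Douglas–Rachford map, S_f(y) = y, then there exists θ ∈ ℝ such that, with ω the componentwise phase of y and x̂ := A(2 b⊙ω − y): x̂ = e^{iθ}x0, ω = e^{iθ}·ω0 where ω0 is the componentwise phase of A*x0, and A y = e^{iθ}x0; in particular x̂ = A y, i.e. the object recovered from a fixed point coincides with the true object up to a global unimodular constant. -/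

import Mathlib

/-!
A fixed point `y` of `S_f` is exactly a point with `A* x̂ = b ⊙ ω`, where `x̂ = A(2 b⊙ω − y)`.
Since `|ω| = 1`, the object `x̂` then has the measured moduli `|A* x̂| = b`, so uniqueness of
phase retrieval gives `x̂ = e^{iθ} x0`; dividing `b ⊙ ω = e^{iθ} A* x0` by `b = |A* x0| > 0`
yields the phases. Finally `A y = 2 A(b⊙ω) − x̂ = 2 A A* x̂ − x̂ = x̂` because `A A* = I`.
-/

open Matrix Complex

noncomputable section

/-- The componentwise phase `z/|z|`. -/
noncomputable def phase (z : ℂ) : ℂ := z / ((‖z‖ : ℝ) : ℂ)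

/-- The Fourier-domain Douglas-Rachford map
`S_f(y) = y + A*A(2 b⊙ω_y − y) − b⊙ω_y`. -/
noncomputable def Sf {N n : ℕ} (Aadj : Matrix (Fin N) (Fin n) ℂ) (b : Fin N → ℝ)
    (y : Fin N → ℂ) : Fin N → ℂ :=
  fun j => y j
    + Aadj.mulVec (Aadjᴴ.mulVec (fun i => 2 * (b i : ℂ) * phase (y i) - y i)) j
    - (b j : ℂ) * phase (y j)

theorem norm_phase {z : ℂ} (hz : z ≠ 0) : ‖phase z‖ = 1 := by
  rw [phase, norm_div, norm_real, norm_norm, div_self (norm_ne_zero_iff.mpr hz)]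

theorem eq_mul_phase_of_norm_mul_eq {z w c : ℂ} (hz : z ≠ 0)
    (h : ((‖z‖ : ℝ) : ℂ) * w = c * z) : w = c * phase z := by
  have hnorm : ((‖z‖ : ℝ) : ℂ) ≠ 0 := ofReal_ne_zero.mpr (norm_ne_zero_iff.mpr hz)
  rw [phase, mul_div_assoc', eq_div_iff hnorm]
  linear_combination h

section Isometry

variable {m n R : Type*} [Fintype m] [Fintype n] [DecidableEq n] [CommRing R] [Star R]
  {A : Matrix m n R}

theorem conjTranspose_mulVec_mulVec_of_isometry (hA : Aᴴ * A = 1) (x : n → R) :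
    Aᴴ *ᵥ (A *ᵥ x) = x := by
  rw [mulVec_mulVec, hA, one_mulVec]

theorem conjTranspose_mulVec_two_smul_sub_of_isometry (hA : Aᴴ * A = 1) {u v : m → R}
    (huv : A *ᵥ (Aᴴ *ᵥ u) = v) : Aᴴ *ᵥ ((2 : R) • v - u) = Aᴴ *ᵥ u := by
  rw [mulVec_sub, mulVec_smul, ← huv, conjTranspose_mulVec_mulVec_of_isometry hA, two_smul,
    add_sub_cancel_right]

end Isometry

theorem Sf_eq_self_iff {N n : ℕ} (Aadj : Matrix (Fin N) (Fin n) ℂ) (b : Fin N → ℝ)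
    (y : Fin N → ℂ) :
    Sf Aadj b y = y ↔
      Aadj *ᵥ (Aadjᴴ *ᵥ fun i => 2 * (b i : ℂ) * phase (y i) - y i)
        = fun j => (b j : ℂ) * phase (y j) := by
  simp only [funext_iff, Sf]
  refine forall_congr' fun j => ⟨fun h => ?_, fun h => ?_⟩ <;> linear_combination h

/-- Uniqueness of the fixed point: if phase retrieval from `b = |A*x0|` is unique up to a
global phase, then every fixed point `y` of the Fourier-domain Douglas-Rachford map
recovers the true object up to a global unimodular constant:
`x̂ = A(2b⊙ω − y) = e^{iθ} x0`, `ω = e^{iθ} ω0` and `A y = e^{iθ} x0`. -/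
theorem stmt17 (N n : ℕ) (Aadj : Matrix (Fin N) (Fin n) ℂ) (hiso : Aadjᴴ * Aadj = 1)
    (x0 : Fin n → ℂ) (hy0 : ∀ j, Aadj.mulVec x0 j ≠ 0)
    (b : Fin N → ℝ) (hb : ∀ j, b j = ‖Aadj.mulVec x0 j‖)
    (huniq : ∀ x : Fin n → ℂ, (∀ j, ‖Aadj.mulVec x j‖ = b j) →
      ∃ θ : ℝ, x = fun i => Complex.exp (Complex.I * (θ : ℂ)) * x0 i)
    (y : Fin N → ℂ) (hy : ∀ j, y j ≠ 0)
    (hfix : Sf Aadj b y = y) :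
    ∃ θ : ℝ,
      (Aadjᴴ.mulVec (fun i => 2 * (b i : ℂ) * phase (y i) - y i)
        = fun i => Complex.exp (Complex.I * (θ : ℂ)) * x0 i) ∧
      ((fun j => phase (y j))
        = fun j => Complex.exp (Complex.I * (θ : ℂ)) * phase (Aadj.mulVec x0 j)) ∧
      (Aadjᴴ.mulVec y = fun i => Complex.exp (Complex.I * (θ : ℂ)) * x0 i) := by
  set u : Fin N → ℂ := fun i => 2 * (b i : ℂ) * phase (y i) - y i
  have hfp : Aadj *ᵥ (Aadjᴴ *ᵥ u) = fun j => (b j : ℂ) * phase (y j) :=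
    (Sf_eq_self_iff Aadj b y).1 hfix
  have hmod : ∀ j, ‖(Aadj *ᵥ (Aadjᴴ *ᵥ u)) j‖ = b j := fun j => by
    rw [congrFun hfp j, norm_mul, norm_phase (hy j), mul_one, norm_real,
      Real.norm_of_nonneg (by rw [hb j]; positivity)]
  obtain ⟨θ, hx⟩ := huniq _ hmod
  have hrot : Aadj *ᵥ (Aadjᴴ *ᵥ u) = Complex.exp (I * θ) • (Aadj *ᵥ x0) := by
    rw [hx]
    exact Aadj.mulVec_smul (Complex.exp (I * θ)) x0
  refine ⟨θ, hx, funext fun j => eq_mul_phase_of_norm_mul_eq (hy0 j) ?_, ?_⟩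
  · rw [← hb j, ← congrFun hfp j, hrot, Pi.smul_apply, smul_eq_mul]
  · have hy_eq : y = (2 : ℂ) • (fun j => (b j : ℂ) * phase (y j)) - u := by
      funext j
      simp only [u, Pi.sub_apply, Pi.smul_apply, smul_eq_mul]
      ring
    rw [hy_eq, conjTranspose_mulVec_two_smul_sub_of_isometry hiso hfp, hx]
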